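/- Let G = (C, I, E) be a finite split graph whose vertex set is partitioned into a clique C and an independent set I, and let G′ be the split graph obtained from G by adding four new vertices x_1, y_1, x_2, y_2 with the edges {x_1 v : v ∈ C}, {y_1 v : v ∈ C}, x_1 y_1, x_1 x_2, and y_1 y_2. If D is a secure dominating set of G, then D ∪ {x_2, y_2} is an isolate secure dominating set of G′. -/
import Mathlib


def Dominates {V : Type*} (G : SimpleGraph V) (S : Finset V) : Prop :=
  ∀ u : V, u ∈ S ∨ ∃ v ∈ S, G.Adj v u

def IsIDS {V : Type*} (G : SimpleGraph V) (S : Finset V) : Prop :=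
  Dominates G S ∧ ∃ v ∈ S, ∀ w ∈ S, ¬ G.Adj v w

def IsISDS {V : Type*} [DecidableEq V] (G : SimpleGraph V) (S : Finset V) : Prop :=
  IsIDS G S ∧ ∀ u ∉ S, ∃ v ∈ S, G.Adj u v ∧ IsIDS G (insert u (S.erase v))

def IsSDS {V : Type*} [DecidableEq V] (G : SimpleGraph V) (S : Finset V) : Prop :=
  Dominates G S ∧ ∀ u ∉ S, ∃ v ∈ S, G.Adj u v ∧ Dominates G (insert u (S.erase v))

/-- The graph `G'` built from a split graph `G` with clique `C` and independent set `Cᶜ`: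
four new vertices `x₁, y₁, x₂, y₂` (encoded as `0, 1, 2, 3 : Fin 4`) are added, together
with the edges `x₁v` and `y₁v` for every `v ∈ C`, and the edges `x₁y₁`, `x₁x₂`, `y₁y₂`. -/
def splitGadget {V : Type*} (G : SimpleGraph V) (C : Set V) :
    SimpleGraph (V ⊕ Fin 4) :=
  SimpleGraph.fromRel (fun p q =>
    (∃ u v : V, p = Sum.inl u ∧ q = Sum.inl v ∧ G.Adj u v) ∨
    (∃ v ∈ C, (p = Sum.inr 0 ∨ p = Sum.inr 1) ∧ q = Sum.inl v) ∨
    (p = Sum.inr 0 ∧ q = Sum.inr 1) ∨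
    (p = Sum.inr 0 ∧ q = Sum.inr 2) ∨
    (p = Sum.inr 1 ∧ q = Sum.inr 3))

section Aux

variable {V : Type*} {G : SimpleGraph V} {C : Set V}

lemma adj_inl_inl {a b : V} :
    (splitGadget G C).Adj (Sum.inl a) (Sum.inl b) ↔ G.Adj a b := by
  simp only [splitGadget, SimpleGraph.fromRel_adj]
  constructor
  · rintro ⟨hne, h | h⟩ <;> simp_all
    exact h.symm
  · intro h
    exact ⟨by simpa using h.ne, Or.inl (Or.inl ⟨a, b, rfl, rfl, h⟩)⟩

lemma adj_inr2 {p : V ⊕ Fin 4} :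
    (splitGadget G C).Adj (Sum.inr 2) p ↔ p = Sum.inr 0 := by
  simp [splitGadget, SimpleGraph.fromRel_adj]
  rintro rfl; simp

lemma adj_inr3 {p : V ⊕ Fin 4} :
    (splitGadget G C).Adj (Sum.inr 3) p ↔ p = Sum.inr 1 := by
  simp [splitGadget, SimpleGraph.fromRel_adj]
  rintro rfl; simp

lemma dom_inl_aux (D' : Finset V) (hD' : Dominates G D') (T : Finset (V ⊕ Fin 4))
    (hsub : ∀ d ∈ D', Sum.inl d ∈ T) (u : V) :
    Sum.inl u ∈ T ∨ ∃ v ∈ T, (splitGadget G C).Adj v (Sum.inl u) := by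
  rcases hD' u with h | ⟨v, hv, hadj⟩
  · exact Or.inl (hsub _ h)
  · exact Or.inr ⟨Sum.inl v, hsub _ hv, adj_inl_inl.mpr hadj⟩

end Aux

/-- If `D` is a secure dominating set of the split graph `G`, then `D ∪ {x₂, y₂}` is an
isolate secure dominating set of `G'`. -/
theorem splitGadget_ISDS_of_SDS {V : Type*} [Fintype V] [DecidableEq V]
    (G : SimpleGraph V) (C : Set V)
    (hClique : ∀ u ∈ C, ∀ v ∈ C, u ≠ v → G.Adj u v)
    (hInd : ∀ u ∉ C, ∀ v ∉ C, ¬ G.Adj u v)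
    (D : Finset V) (hD : IsSDS G D) :
    IsISDS (splitGadget G C) (D.image Sum.inl ∪ {Sum.inr 2, Sum.inr 3}) := by
  obtain ⟨hDom, hSec⟩ := hD
  set S : Finset (V ⊕ Fin 4) := D.image Sum.inl ∪ {Sum.inr 2, Sum.inr 3} with hSdef
  have h2S : Sum.inr 2 ∈ S := by simp [hSdef]
  have h3S : Sum.inr 3 ∈ S := by simp [hSdef]
  have h0S : Sum.inr 0 ∉ S := by simp [hSdef]
  have h1S : Sum.inr 1 ∉ S := by simp [hSdef]
  have iso2 : ∀ (T : Finset (V ⊕ Fin 4)), Sum.inr 0 ∉ T →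
      ∀ w ∈ T, ¬ (splitGadget G C).Adj (Sum.inr 2) w := by
    intro T h0 w hw hadj
    rw [adj_inr2] at hadj; subst hadj; exact h0 hw
  have iso3 : ∀ (T : Finset (V ⊕ Fin 4)), Sum.inr 1 ∉ T →
      ∀ w ∈ T, ¬ (splitGadget G C).Adj (Sum.inr 3) w := by
    intro T h1 w hw hadj
    rw [adj_inr3] at hadj; subst hadj; exact h1 hw
  have hdomS : Dominates (splitGadget G C) S := by
    rintro (u | i)
    · exact dom_inl_aux D hDom S (fun d hd => by simp [hSdef, hd]) u
    · fin_cases i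
      · exact Or.inr ⟨Sum.inr 2, h2S, adj_inr2.mpr rfl⟩
      · exact Or.inr ⟨Sum.inr 3, h3S, adj_inr3.mpr rfl⟩
      · exact Or.inl h2S
      · exact Or.inl h3S
  refine ⟨⟨hdomS, Sum.inr 2, h2S, iso2 S h0S⟩, ?_⟩
  rintro (w | i) hu
  · have hw : w ∉ D := fun h => hu (by simp [hSdef, h])
    obtain ⟨v, hvD, hadj, hdom'⟩ := hSec w hw
    refine ⟨Sum.inl v, by simp [hSdef, hvD], adj_inl_inl.mpr hadj, ?_, ?_⟩
    · rintro (u | i)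
      · refine dom_inl_aux (insert w (D.erase v)) hdom' _ ?_ u
        intro d hd
        rcases Finset.mem_insert.mp hd with rfl | hd
        · exact Finset.mem_insert_self _ _
        · obtain ⟨hdv, hdD⟩ := Finset.mem_erase.mp hd
          exact Finset.mem_insert_of_mem (Finset.mem_erase.mpr
            ⟨by simpa using hdv, by simp [hSdef, hdD]⟩)
      · fin_cases i
        · exact Or.inr ⟨Sum.inr 2, Finset.mem_insert_of_mem
            (Finset.mem_erase.mpr ⟨by simp, h2S⟩), adj_inr2.mpr rfl⟩
        · exact Or.inr ⟨Sum.inr 3, Finset.mem_insert_of_mem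
            (Finset.mem_erase.mpr ⟨by simp, h3S⟩), adj_inr3.mpr rfl⟩
        · exact Or.inl (Finset.mem_insert_of_mem (Finset.mem_erase.mpr ⟨by simp, h2S⟩))
        · exact Or.inl (Finset.mem_insert_of_mem (Finset.mem_erase.mpr ⟨by simp, h3S⟩))
    · refine ⟨Sum.inr 2, Finset.mem_insert_of_mem (Finset.mem_erase.mpr ⟨by simp, h2S⟩),
        iso2 _ ?_⟩
      simp [h0S]
  · fin_cases i
    · refine ⟨Sum.inr 2, h2S, (adj_inr2.mpr rfl).symm, ?_, ?_⟩
      · rintro (u | i)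
        · refine dom_inl_aux D hDom _ ?_ u
          intro d hd
          exact Finset.mem_insert_of_mem (Finset.mem_erase.mpr ⟨by simp, by simp [hSdef, hd]⟩)
        · fin_cases i
          · exact Or.inl (Finset.mem_insert_self _ _)
          · exact Or.inr ⟨Sum.inr 3, Finset.mem_insert_of_mem
              (Finset.mem_erase.mpr ⟨by simp, h3S⟩), adj_inr3.mpr rfl⟩
          · exact Or.inr ⟨Sum.inr 0, Finset.mem_insert_self _ _, (adj_inr2.mpr rfl).symm⟩
          · exact Or.inl (Finset.mem_insert_of_mem (Finset.mem_erase.mpr ⟨by simp, h3S⟩))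
      · refine ⟨Sum.inr 3, Finset.mem_insert_of_mem (Finset.mem_erase.mpr ⟨by simp, h3S⟩),
          iso3 _ ?_⟩
        simp [h1S]
    · refine ⟨Sum.inr 3, h3S, (adj_inr3.mpr rfl).symm, ?_, ?_⟩
      · rintro (u | i)
        · refine dom_inl_aux D hDom _ ?_ u
          intro d hd
          exact Finset.mem_insert_of_mem (Finset.mem_erase.mpr ⟨by simp, by simp [hSdef, hd]⟩)
        · fin_cases i
          · exact Or.inr ⟨Sum.inr 2, Finset.mem_insert_of_mem
              (Finset.mem_erase.mpr ⟨by simp, h2S⟩), adj_inr2.mpr rfl⟩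
          · exact Or.inl (Finset.mem_insert_self _ _)
          · exact Or.inl (Finset.mem_insert_of_mem (Finset.mem_erase.mpr ⟨by simp, h2S⟩))
          · exact Or.inr ⟨Sum.inr 1, Finset.mem_insert_self _ _, (adj_inr3.mpr rfl).symm⟩
      · refine ⟨Sum.inr 2, Finset.mem_insert_of_mem (Finset.mem_erase.mpr ⟨by simp, h2S⟩),
          iso2 _ ?_⟩
        simp [h0S]
    · exact (hu h2S).elim
    · exact (hu h3S).elim
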